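/- Let a be a real number with 0 ≤ a ≤ 1 and a ≠ 1/2, let n be a natural number, let π be a probability vector on {0,1}^n with s = πᵀπ < 1, write C = C_a(n) and c = ((a² + (1−a)²)/(2a−1)²)^n. Then the loss L = Tr( C⁻¹ · diag(Cπ) · (C⁻¹)ᵀ − π πᵀ ) / Tr( diag(π) − π πᵀ ) satisfies L = (c − s)/(1 − s), and moreover (c − 2^(−n))/(1 − 2^(−n)) ≤ L. -/

import Mathlib

/-!
`C_{a,b}(n)` is the `n`-fold Kronecker power of the `2 × 2` matrix `[[a, b], [b, a]]`, so products,
Hadamard products, inverses and column sums of such matrices stay in the family and are computed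
coordinatewise. In particular `C_a(n)⁻¹ = C_{a', b'}(n)` with `a' = a / (2a - 1)`,
`b' = -(1 - a) / (2a - 1)`, whose columns all have squared norm `c`; since `C_a(n)` preserves total
mass, `Tr(C⁻¹ diag(Cπ) C⁻ᵀ) = c`, while `Tr(π πᵀ) = s`. The lower bound holds because
`(c - s) / (1 - s) = 1 + (c - 1) / (1 - s)` increases with `s` when `c ≥ 1`, and `s ≥ 2⁻ⁿ` by
Cauchy–Schwarz.
-/

open Matrix

/-- `Cmat a b n` is the `2^n × 2^n` real matrix indexed by bit strings `x, y ∈ {0,1}^n`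
whose `(x, y)` entry is `a ^ (n - d) * b ^ d`, where `d` is the Hamming distance
between `x` and `y`. -/
def Cmat (a b : ℝ) (n : ℕ) : Matrix (Fin n → Fin 2) (Fin n → Fin 2) ℝ :=
  Matrix.of fun x y => a ^ (n - hammingDist x y) * b ^ hammingDist x y

/-- `CmatB a n` abbreviates `Cmat a (1 - a) n`. -/
def CmatB (a : ℝ) (n : ℕ) : Matrix (Fin n → Fin 2) (Fin n → Fin 2) ℝ :=
  Cmat a (1 - a) n

open Finset

section Kronecker

variable {n : ℕ}

theorem Cmat_apply (a b : ℝ) (x y : Fin n → Fin 2) :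
    Cmat a b n x y = ∏ i, if x i = y i then a else b := by
  have hcard := card_filter_add_card_filter_not (s := (univ : Finset (Fin n))) (fun i => x i = y i)
  rw [card_univ, Fintype.card_fin] at hcard
  rw [prod_ite, prod_const, prod_const, Cmat, of_apply, hammingDist]
  simp only [ne_eq] at hcard ⊢
  congr 2
  omega

theorem Cmat_mul (a b c d : ℝ) :
    Cmat a b n * Cmat c d n = Cmat (a * c + b * d) (a * d + b * c) n := by
  ext x z
  simp only [mul_apply, Cmat_apply, ← prod_mul_distrib]
  rw [← Fintype.prod_sum fun i t => (if x i = t then a else b) * (if t = z i then c else d)]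
  refine prod_congr rfl fun i _ => ?_
  generalize x i = u, z i = w
  fin_cases u <;> fin_cases w <;> simp [Fin.sum_univ_two] <;> ring

theorem Cmat_one_zero : Cmat 1 0 n = 1 := by
  ext x y
  rw [Cmat_apply]
  rcases eq_or_ne x y with rfl | hxy
  · simp
  · obtain ⟨i, hi⟩ := Function.ne_iff.mp hxy
    rw [one_apply_ne hxy]
    exact prod_eq_zero (mem_univ i) (if_neg hi)

theorem Cmat_hadamard (a b c d : ℝ) : Cmat a b n ⊙ Cmat c d n = Cmat (a * c) (b * d) n := by
  ext x y
  simp only [hadamard_apply, Cmat_apply, ← prod_mul_distrib]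
  exact prod_congr rfl fun i _ => by split_ifs <;> rfl

theorem sum_Cmat_apply_left (a b : ℝ) (y : Fin n → Fin 2) :
    ∑ x, Cmat a b n x y = (a + b) ^ n := by
  simp only [Cmat_apply]
  rw [← Fintype.prod_sum fun i t => if t = y i then a else b, ← Fin.prod_const]
  refine prod_congr rfl fun i _ => ?_
  generalize y i = u
  fin_cases u <;> simp [Fin.sum_univ_two, add_comm]

theorem sum_Cmat_mulVec (a b : ℝ) (v : (Fin n → Fin 2) → ℝ) :
    ∑ y, (Cmat a b n *ᵥ v) y = (a + b) ^ n * ∑ x, v x := by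
  simp only [mulVec, dotProduct]
  rw [sum_comm, mul_sum]
  simp only [← sum_mul, sum_Cmat_apply_left]

theorem Cmat_inv {a b : ℝ} (h : a ^ 2 ≠ b ^ 2) :
    (Cmat a b n)⁻¹ = Cmat (a / (a ^ 2 - b ^ 2)) (-b / (a ^ 2 - b ^ 2)) n := by
  have h' : a ^ 2 - b ^ 2 ≠ 0 := sub_ne_zero.mpr h
  refine inv_eq_right_inv ?_
  rw [Cmat_mul, ← Cmat_one_zero]
  congr 1 <;> field_simp <;> ring

end Kronecker

theorem Matrix.trace_mul_diagonal_mul_transpose {ι R : Type*} [Fintype ι] [DecidableEq ι]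
    [CommSemiring R] (D : Matrix ι ι R) (v : ι → R) :
    trace (D * diagonal v * Dᵀ) = ∑ y, v y * ∑ x, D x y ^ 2 := by
  simp only [trace, diag_apply, mul_apply, transpose_apply, diagonal_apply, mul_ite, mul_zero,
    sum_ite_eq', mem_univ, if_true, mul_sum]
  rw [sum_comm]
  exact sum_congr rfl fun y _ => sum_congr rfl fun x _ => by ring

theorem trace_Cmat_inv_mul_diagonal_mulVec_mul_transpose {n : ℕ} {a b : ℝ} (h : a ^ 2 ≠ b ^ 2)
    (v : (Fin n → Fin 2) → ℝ) :
    trace ((Cmat a b n)⁻¹ * diagonal (Cmat a b n *ᵥ v) * ((Cmat a b n)⁻¹)ᵀ)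
      = ((a ^ 2 + b ^ 2) / (a ^ 2 - b ^ 2) ^ 2) ^ n * (a + b) ^ n * ∑ x, v x := by
  have hsq : ∀ y, ∑ x, (Cmat a b n)⁻¹ x y ^ 2 = ((a ^ 2 + b ^ 2) / (a ^ 2 - b ^ 2) ^ 2) ^ n := by
    intro y
    simp only [sq, ← hadamard_apply, Cmat_inv h, Cmat_hadamard, sum_Cmat_apply_left]
    congr 1
    field_simp
  rw [trace_mul_diagonal_mul_transpose]
  simp only [hsq, ← sum_mul, sum_Cmat_mulVec]
  ring

theorem inv_card_le_sum_sq {ι : Type*} [Fintype ι] {p : ι → ℝ} (hp : ∑ x, p x = 1) :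
    1 / Fintype.card ι ≤ ∑ x, p x ^ 2 := by
  refine div_le_of_le_mul₀ (Nat.cast_nonneg _) (by positivity) ?_
  have := sq_sum_le_card_mul_sum_sq (s := univ) (f := p)
  rw [hp, card_univ] at this
  linarith

theorem one_le_sq_add_one_sub_sq_div {a : ℝ} (ha0 : 0 ≤ a) (ha1 : a ≤ 1) (ha : a ≠ 1 / 2) :
    1 ≤ (a ^ 2 + (1 - a) ^ 2) / (2 * a - 1) ^ 2 := by
  have h2a : 2 * a - 1 ≠ 0 := fun h => ha (by linarith)
  rw [le_div_iff₀ (by positivity)]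
  nlinarith

theorem sub_div_one_sub_le_sub_div_one_sub {c s t : ℝ} (hc : 1 ≤ c) (hts : t ≤ s) (hs : s < 1) :
    (c - t) / (1 - t) ≤ (c - s) / (1 - s) := by
  rw [div_le_div_iff₀ (by linarith) (by linarith)]
  nlinarith [mul_nonneg (sub_nonneg.mpr hc) (sub_nonneg.mpr hts)]

theorem loss_formula_and_lower_bound_general (a : ℝ) (ha0 : 0 ≤ a) (ha1 : a ≤ 1) (ha : a ≠ 1 / 2)
    (n : ℕ) (π : (Fin n → Fin 2) → ℝ) (hsum : ∑ x, π x = 1)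
    (hs : ∑ x, π x ^ 2 < 1) :
    Matrix.trace
          ((CmatB a n)⁻¹ * Matrix.diagonal ((CmatB a n).mulVec π) * ((CmatB a n)⁻¹)ᵀ
            - Matrix.vecMulVec π π)
        / Matrix.trace (Matrix.diagonal π - Matrix.vecMulVec π π)
      = (((a ^ 2 + (1 - a) ^ 2) / (2 * a - 1) ^ 2) ^ n - ∑ x, π x ^ 2)
          / (1 - ∑ x, π x ^ 2) ∧
    (((a ^ 2 + (1 - a) ^ 2) / (2 * a - 1) ^ 2) ^ n - (1 / 2 ^ n)) / (1 - 1 / 2 ^ n)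
      ≤ Matrix.trace
            ((CmatB a n)⁻¹ * Matrix.diagonal ((CmatB a n).mulVec π) * ((CmatB a n)⁻¹)ᵀ
              - Matrix.vecMulVec π π)
          / Matrix.trace (Matrix.diagonal π - Matrix.vecMulVec π π) := by
  have hdiff : a ^ 2 - (1 - a) ^ 2 = 2 * a - 1 := by ring
  have hsq : a ^ 2 ≠ (1 - a) ^ 2 := fun h => ha (by linarith)
  have htr : trace (vecMulVec π π) = ∑ x, π x ^ 2 := by simp [dotProduct, sq]
  have hloss : trace ((CmatB a n)⁻¹ * diagonal ((CmatB a n) *ᵥ π) * ((CmatB a n)⁻¹)ᵀ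
        - vecMulVec π π) / trace (diagonal π - vecMulVec π π)
      = (((a ^ 2 + (1 - a) ^ 2) / (2 * a - 1) ^ 2) ^ n - ∑ x, π x ^ 2) / (1 - ∑ x, π x ^ 2) := by
    rw [trace_sub, trace_sub, htr, trace_diagonal, CmatB,
      trace_Cmat_inv_mul_diagonal_mulVec_mul_transpose hsq, hdiff, hsum]
    norm_num
  refine ⟨hloss, hloss ▸ sub_div_one_sub_le_sub_div_one_sub
    (one_le_pow₀ (one_le_sq_add_one_sub_sq_div ha0 ha1 ha)) ?_ hs⟩
  simpa using inv_card_le_sum_sq hsum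

theorem loss_formula_and_lower_bound (a : ℝ) (ha0 : 0 ≤ a) (ha1 : a ≤ 1) (ha : a ≠ 1 / 2)
    (n : ℕ) (π : (Fin n → Fin 2) → ℝ) (hπ : ∀ x, 0 ≤ π x) (hsum : ∑ x, π x = 1)
    (hs : ∑ x, π x ^ 2 < 1) :
    Matrix.trace
          ((CmatB a n)⁻¹ * Matrix.diagonal ((CmatB a n).mulVec π) * ((CmatB a n)⁻¹)ᵀ
            - Matrix.vecMulVec π π)
        / Matrix.trace (Matrix.diagonal π - Matrix.vecMulVec π π)
      = (((a ^ 2 + (1 - a) ^ 2) / (2 * a - 1) ^ 2) ^ n - ∑ x, π x ^ 2)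
          / (1 - ∑ x, π x ^ 2) ∧
    (((a ^ 2 + (1 - a) ^ 2) / (2 * a - 1) ^ 2) ^ n - (1 / 2 ^ n)) / (1 - 1 / 2 ^ n)
      ≤ Matrix.trace
            ((CmatB a n)⁻¹ * Matrix.diagonal ((CmatB a n).mulVec π) * ((CmatB a n)⁻¹)ᵀ
              - Matrix.vecMulVec π π)
          / Matrix.trace (Matrix.diagonal π - Matrix.vecMulVec π π) :=
  loss_formula_and_lower_bound_general a ha0 ha1 ha n π hsum hs
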